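/- arXiv:1707.01432 — 5 statements merged into one kernel-verified Lean document; each statement's English description precedes it below -/
import Mathlib

section
/- Let Φ(u) = ∑_{k=1}^{T+1} [ w(k-1)|Δu(k-1)|^{p(k-1)}/p(k-1) + q(k)|u(k)|^{p(k)}/p(k) ] on the space W of functions u : {0,...,T+1} → ℝ with u(0)=u(T+1)=0, where p maps into [2,∞) with minimum p⁻ and maximum p⁺, and w,q ≥ 1. Then Φ is coercive: Φ(u) → ∞ as ‖u‖ → ∞; in fact Φ(u) ≥ ‖u‖^{p⁻}/p⁺ − C₁/p⁺ whenever ‖u‖ ≥ 1, where C₁ = (T+1)(w⁺+q⁺). -/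
open Filter

lemma aux_term_7 (x pm pp p' c cplus : ℝ) (hx : 0 ≤ x) (h2 : 2 ≤ pm)
    (hpl : pm ≤ p') (hpu : p' ≤ pp) (hc : 1 ≤ c) (hcu : c ≤ cplus) :
    (c * x ^ pm - cplus) / pp ≤ c * x ^ p' / p' := by
  have hpm0 : (0:ℝ) < pm := by linarith
  have hp'0 : (0:ℝ) < p' := by linarith
  have hpp0 : (0:ℝ) < pp := by linarith
  have h1 : c * x ^ pm - cplus ≤ c * x ^ p' := by
    rcases le_or_gt 1 x with h | h
    · have := Real.rpow_le_rpow_of_exponent_le h hpl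
      nlinarith [Real.rpow_nonneg hx pm]
    · have hA : x ^ pm ≤ 1 := Real.rpow_le_one hx h.le hpm0.le
      have hB : 0 ≤ x ^ p' := Real.rpow_nonneg hx p'
      nlinarith
  have step1 : (c * x ^ pm - cplus) / pp ≤ c * x ^ p' / pp :=
    (div_le_div_iff_of_pos_right hpp0).mpr h1
  have step2 : c * x ^ p' / pp ≤ c * x ^ p' / p' := by
    apply div_le_div_of_nonneg_left _ hp'0 hpu
    positivity
  linarith

theorem stmt_7 (T : ℕ) (hT : 1 ≤ T) (p w q : ℕ → ℝ)
    (hp : ∀ k ≤ T + 1, 2 ≤ p k)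
    (hw : ∀ k ≤ T, 1 ≤ w k) (hq : ∀ k, 1 ≤ k → k ≤ T + 1 → 1 ≤ q k)
    (pm pp wplus qplus : ℝ)
    (hpm : IsLeast (p '' {k | k ≤ T + 1}) pm)
    (hpp : IsGreatest (p '' {k | k ≤ T + 1}) pp)
    (hwplus : IsGreatest (w '' {k | k ≤ T}) wplus)
    (hqplus : IsGreatest (q '' {k | 1 ≤ k ∧ k ≤ T + 1}) qplus)
    (Phi Norm : (ℕ → ℝ) → ℝ)
    (hPhi : ∀ u : ℕ → ℝ, Phi u = ∑ k ∈ Finset.Icc 1 (T + 1),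
        (w (k - 1) * |u k - u (k - 1)| ^ p (k - 1) / p (k - 1)
          + q k * |u k| ^ p k / p k))
    (hNorm : ∀ u : ℕ → ℝ, Norm u = (∑ k ∈ Finset.Icc 1 (T + 1),
        (w (k - 1) * |u k - u (k - 1)| ^ pm + q k * |u k| ^ pm)) ^ (1 / pm)) :
    (∀ u : ℕ → ℝ, u 0 = 0 → u (T + 1) = 0 → 1 ≤ Norm u →
        Phi u ≥ (Norm u) ^ pm / pp - ((T : ℝ) + 1) * (wplus + qplus) / pp) ∧
    (∀ U : ℕ → (ℕ → ℝ), (∀ n, U n 0 = 0 ∧ U n (T + 1) = 0) →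
        Tendsto (fun n => Norm (U n)) atTop atTop →
        Tendsto (fun n => Phi (U n)) atTop atTop) := by
  obtain ⟨⟨k0, hk0, hk0e⟩, hpmlb⟩ := hpm
  have hpm2 : 2 ≤ pm := hk0e ▸ hp k0 hk0
  have hpm0 : (0:ℝ) < pm := by linarith
  have hppm : pm ≤ pp := hpmlb hpp.1
  have hpp0 : (0:ℝ) < pp := by linarith
  obtain ⟨⟨j0, hj0, hj0e⟩, hwub⟩ := hwplus
  have hw1 : 1 ≤ wplus := hj0e ▸ hw j0 hj0
  obtain ⟨⟨j1, hj1, hj1e⟩, hqub⟩ := hqplus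
  have hq1 : 1 ≤ qplus := hj1e ▸ hq j1 hj1.1 hj1.2
  set C : ℝ := ((T : ℝ) + 1) * (wplus + qplus) with hC
  -- core estimate
  have key : ∀ u : ℕ → ℝ,
      (∑ k ∈ Finset.Icc 1 (T + 1),
        (w (k - 1) * |u k - u (k - 1)| ^ pm + q k * |u k| ^ pm)) / pp - C / pp
      ≤ Phi u := by
    intro u
    rw [hPhi u]
    have hsum : ∑ k ∈ Finset.Icc 1 (T + 1),
        ((w (k - 1) * |u k - u (k - 1)| ^ pm + q k * |u k| ^ pm) / pp
          - (wplus + qplus) / pp)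
        ≤ ∑ k ∈ Finset.Icc 1 (T + 1),
        (w (k - 1) * |u k - u (k - 1)| ^ p (k - 1) / p (k - 1)
          + q k * |u k| ^ p k / p k) := by
      apply Finset.sum_le_sum
      intro k hk
      rw [Finset.mem_Icc] at hk
      have hk1 : k - 1 ≤ T := by omega
      have hk1' : k - 1 ≤ T + 1 := by omega
      have hkT : k ≤ T + 1 := hk.2
      have ha1 := aux_term_7 (|u k - u (k - 1)|) pm pp _ _ _ (abs_nonneg _) hpm2
          (hpmlb ⟨k - 1, hk1', rfl⟩) (hpp.2 ⟨k - 1, hk1', rfl⟩)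
          (hw _ hk1) (hwub ⟨k - 1, hk1, rfl⟩)
      have ha2 := aux_term_7 (|u k|) pm pp _ _ _ (abs_nonneg _) hpm2
          (hpmlb ⟨k, hkT, rfl⟩) (hpp.2 ⟨k, hkT, rfl⟩)
          (hq _ hk.1 hkT) (hqub ⟨k, ⟨hk.1, hkT⟩, rfl⟩)
      have heq : (w (k - 1) * |u k - u (k - 1)| ^ pm + q k * |u k| ^ pm) / pp
          - (wplus + qplus) / pp
          = (w (k - 1) * |u k - u (k - 1)| ^ pm - wplus) / pp
            + (q k * |u k| ^ pm - qplus) / pp := by ring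
      linarith
    refine le_trans (le_of_eq ?_) hsum
    rw [Finset.sum_sub_distrib, ← Finset.sum_div, Finset.sum_const, Nat.card_Icc,
      Nat.add_sub_cancel, nsmul_eq_mul, hC]
    push_cast
    ring
  constructor
  · intro u _ _ hnu
    have hS : (0:ℝ) ≤ ∑ k ∈ Finset.Icc 1 (T + 1),
        (w (k - 1) * |u k - u (k - 1)| ^ pm + q k * |u k| ^ pm) := by
      apply Finset.sum_nonneg
      intro k hk
      rw [Finset.mem_Icc] at hk
      have := hw (k - 1) (by omega)
      have := hq k hk.1 hk.2
      have := Real.rpow_nonneg (abs_nonneg (u k - u (k - 1))) pm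
      have := Real.rpow_nonneg (abs_nonneg (u k)) pm
      nlinarith
    have hnorm_pow : (Norm u) ^ pm = ∑ k ∈ Finset.Icc 1 (T + 1),
        (w (k - 1) * |u k - u (k - 1)| ^ pm + q k * |u k| ^ pm) := by
      rw [hNorm u]
      rw [← Real.rpow_mul hS, one_div_mul_cancel (ne_of_gt hpm0), Real.rpow_one]
    rw [ge_iff_le, hnorm_pow]
    exact key u
  · intro U hU htend
    have h1 : ∀ᶠ n in atTop, 1 ≤ Norm (U n) := htend.eventually_ge_atTop 1
    have hmono : ∀ᶠ n in atTop,
        (Norm (U n)) ^ pm / pp - C / pp ≤ Phi (U n) := by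
      filter_upwards [h1] with n hn
      have hS : (0:ℝ) ≤ ∑ k ∈ Finset.Icc 1 (T + 1),
          (w (k - 1) * |U n k - U n (k - 1)| ^ pm + q k * |U n k| ^ pm) := by
        apply Finset.sum_nonneg
        intro k hk
        rw [Finset.mem_Icc] at hk
        have := hw (k - 1) (by omega)
        have := hq k hk.1 hk.2
        have := Real.rpow_nonneg (abs_nonneg (U n k - U n (k - 1))) pm
        have := Real.rpow_nonneg (abs_nonneg (U n k)) pm
        nlinarith
      have hnorm_pow : (Norm (U n)) ^ pm = ∑ k ∈ Finset.Icc 1 (T + 1),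
          (w (k - 1) * |U n k - U n (k - 1)| ^ pm + q k * |U n k| ^ pm) := by
        rw [hNorm (U n)]
        rw [← Real.rpow_mul hS, one_div_mul_cancel (ne_of_gt hpm0), Real.rpow_one]
      rw [hnorm_pow]
      exact key (U n)
    apply tendsto_atTop_mono' _ hmono
    have h2 : Tendsto (fun n => (Norm (U n)) ^ pm) atTop atTop :=
      (tendsto_rpow_atTop hpm0).comp htend
    have h3 : Tendsto (fun n => (Norm (U n)) ^ pm / pp) atTop atTop :=
      h2.atTop_div_const hpp0
    simpa [sub_eq_add_neg] using tendsto_atTop_add_const_right atTop (-(C / pp)) h3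
end

section
/- Let T ≥ 1 and suppose 2 ≤ p⁻ ≤ p⁺. Let W be the space of u : {0,...,T+1} → ℝ with u(0)=u(T+1)=0, with norm ‖u‖ = (∑_{k=1}^{T+1} w(k-1)|Δu(k-1)|^{p⁻} + q(k)|u(k)|^{p⁻})^{1/p⁻}, weights w,q ≥ 1. Let φ(u) = ∑_{k=1}^{T+1}[w(k-1)|Δu(k-1)|^{p(k-1)} + q(k)|u(k)|^{p(k)}] and Φ(u) = ∑_{k=1}^{T+1}[w(k-1)|Δu(k-1)|^{p(k-1)}/p(k-1) + q(k)|u(k)|^{p(k)}/p(k)]. If Φ(u) < r with r·p⁺ < 1, then max_{k∈{1,...,T}} |u(k)| ≤ (2T+2)^{(p⁻−1)/p⁻} · (r p⁺)^{1/p⁺} / K₀, where K₀ = ((2T+2)·max{w⁺,q⁺})^{(p⁻−p⁺)/(p⁺p⁻)}. -/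
theorem stmt_9 (T : ℕ) (hT : 1 ≤ T) (p w q : ℕ → ℝ)
    (hw : ∀ k ≤ T, 1 ≤ w k) (hq : ∀ k, 1 ≤ k → k ≤ T + 1 → 1 ≤ q k)
    (pm pp wplus qplus : ℝ) (hpm2 : 2 ≤ pm)
    (hrange : ∀ k ≤ T + 1, pm ≤ p k ∧ p k ≤ pp)
    (hwplus : IsGreatest (w '' {k | k ≤ T}) wplus)
    (hqplus : IsGreatest (q '' {k | 1 ≤ k ∧ k ≤ T + 1}) qplus)
    (u : ℕ → ℝ) (hu0 : u 0 = 0) (huT : u (T + 1) = 0)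
    (r : ℝ) (hr : r * pp < 1)
    (hPhi : (∑ k ∈ Finset.Icc 1 (T + 1),
        (w (k - 1) * |u k - u (k - 1)| ^ p (k - 1) / p (k - 1)
          + q k * |u k| ^ p k / p k)) < r) :
    ∀ k ∈ Finset.Icc 1 T, |u k| ≤
      (2 * (T : ℝ) + 2) ^ ((pm - 1) / pm) * (r * pp) ^ (1 / pp) /
        (((2 * (T : ℝ) + 2) * max wplus qplus) ^ ((pm - pp) / (pp * pm))) := by
  intro k hk
  have hpm_le_pp : pm ≤ pp := le_trans (hrange 0 (by omega)).1 (hrange 0 (by omega)).2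
  have hpp0 : (0:ℝ) < pp := by linarith
  have hpm0 : (0:ℝ) < pm := by linarith
  simp only [Finset.mem_Icc] at hk
  have hkS : k ∈ Finset.Icc 1 (T+1) := Finset.mem_Icc.2 ⟨hk.1, by omega⟩
  have hp_pos : ∀ j ≤ T+1, 0 < p j := fun j hj =>
    lt_of_lt_of_le (by linarith) (hrange j hj).1
  have hterm : ∀ j, 1 ≤ j → j ≤ T + 1 →
      0 ≤ w (j-1) * |u j - u (j-1)| ^ p (j-1) ∧ 0 ≤ q j * |u j| ^ p j := by
    intro j hj1 hj2
    have hw1 : 1 ≤ w (j-1) := hw _ (by omega)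
    have hq1 : 1 ≤ q j := hq j hj1 hj2
    constructor
    · exact mul_nonneg (by linarith) (Real.rpow_nonneg (abs_nonneg _) _)
    · exact mul_nonneg (by linarith) (Real.rpow_nonneg (abs_nonneg _) _)
  -- r is positive
  have hr0 : 0 < r := by
    refine lt_of_le_of_lt ?_ hPhi
    apply Finset.sum_nonneg
    intro j hj
    simp only [Finset.mem_Icc] at hj
    obtain ⟨ha, hb⟩ := hterm j hj.1 hj.2
    have h1 := hp_pos (j-1) (by omega)
    have h2 := hp_pos j hj.2
    positivity
  -- φ ≤ pp * Φ
  have key : (∑ j ∈ Finset.Icc 1 (T+1),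
        (w (j-1) * |u j - u (j-1)| ^ p (j-1) + q j * |u j| ^ p j))
      ≤ pp * ∑ j ∈ Finset.Icc 1 (T+1),
        (w (j-1) * |u j - u (j-1)| ^ p (j-1) / p (j-1) + q j * |u j| ^ p j / p j) := by
    rw [Finset.mul_sum]
    apply Finset.sum_le_sum
    intro j hj
    simp only [Finset.mem_Icc] at hj
    obtain ⟨ha, hb⟩ := hterm j hj.1 hj.2
    have h1 := hp_pos (j-1) (by omega)
    have h2 := hp_pos j hj.2
    have h1' : p (j-1) ≤ pp := (hrange _ (by omega)).2
    have h2' : p j ≤ pp := (hrange _ hj.2).2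
    rw [mul_add]
    have e1 : w (j-1) * |u j - u (j-1)| ^ p (j-1)
        ≤ pp * (w (j-1) * |u j - u (j-1)| ^ p (j-1) / p (j-1)) := by
      calc w (j-1) * |u j - u (j-1)| ^ p (j-1)
          = p (j-1) * (w (j-1) * |u j - u (j-1)| ^ p (j-1) / p (j-1)) := by
            field_simp
        _ ≤ pp * (w (j-1) * |u j - u (j-1)| ^ p (j-1) / p (j-1)) :=
            mul_le_mul_of_nonneg_right h1' (div_nonneg ha h1.le)
    have e2 : q j * |u j| ^ p j ≤ pp * (q j * |u j| ^ p j / p j) := by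
      calc q j * |u j| ^ p j = p j * (q j * |u j| ^ p j / p j) := by field_simp
        _ ≤ pp * (q j * |u j| ^ p j / p j) :=
            mul_le_mul_of_nonneg_right h2' (div_nonneg hb h2.le)
    linarith
  have hphi_lt : (∑ j ∈ Finset.Icc 1 (T+1),
        (w (j-1) * |u j - u (j-1)| ^ p (j-1) + q j * |u j| ^ p j)) < r * pp := by
    refine lt_of_le_of_lt key ?_
    rw [mul_comm r pp]
    exact mul_lt_mul_of_pos_left hPhi hpp0
  -- single term bound
  have hsingle : q k * |u k| ^ p k ≤ ∑ j ∈ Finset.Icc 1 (T+1),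
      (w (j-1) * |u j - u (j-1)| ^ p (j-1) + q j * |u j| ^ p j) := by
    have hs : (w (k-1) * |u k - u (k-1)| ^ p (k-1) + q k * |u k| ^ p k)
        ≤ ∑ j ∈ Finset.Icc 1 (T+1),
          (w (j-1) * |u j - u (j-1)| ^ p (j-1) + q j * |u j| ^ p j) := by
      refine Finset.single_le_sum (f := fun j => w (j-1) * |u j - u (j-1)| ^ p (j-1) + q j * |u j| ^ p j) (fun j hj => ?_) hkS
      simp only [Finset.mem_Icc] at hj
      obtain ⟨ha, hb⟩ := hterm j hj.1 hj.2
      exact add_nonneg ha hb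
    have hwk := (hterm k hk.1 (by omega)).1
    linarith
  have hq1 : 1 ≤ q k := hq k hk.1 (by omega)
  have hupk : |u k| ^ p k < r * pp := by
    have h0 : |u k| ^ p k ≤ q k * |u k| ^ p k :=
      le_mul_of_one_le_left (Real.rpow_nonneg (abs_nonneg _) _) hq1
    linarith
  have hpk_pos : 0 < p k := hp_pos k (by omega)
  have hpk_le : p k ≤ pp := (hrange k (by omega)).2
  -- |u k| ≤ 1
  have hule1 : |u k| ≤ 1 := by
    by_contra h
    push_neg at h
    have : 1 < |u k| ^ p k :=
      (Real.one_lt_rpow_iff_of_pos (by linarith)).2 (Or.inl ⟨h, hpk_pos⟩)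
    linarith
  -- main bound
  have hmain : |u k| ≤ (r * pp) ^ (1 / pp) := by
    rcases eq_or_lt_of_le (abs_nonneg (u k)) with h0 | h0
    · rw [← h0]
      exact Real.rpow_nonneg (by positivity) _
    · have hle : |u k| ^ pp ≤ |u k| ^ p k :=
        Real.rpow_le_rpow_of_exponent_ge h0 hule1 hpk_le
      have : |u k| ^ pp ≤ r * pp := by linarith
      calc |u k| = (|u k| ^ pp) ^ (1 / pp) := by
            rw [one_div, Real.rpow_rpow_inv (abs_nonneg _) hpp0.ne']
        _ ≤ (r * pp) ^ (1 / pp) :=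
            Real.rpow_le_rpow (Real.rpow_nonneg (abs_nonneg _) _) this (by positivity)
  -- factor bounds
  have hbase1 : (1:ℝ) ≤ 2 * (T:ℝ) + 2 := by
    have : (1:ℝ) ≤ (T:ℝ) := by exact_mod_cast hT
    linarith
  have hA1 : (1:ℝ) ≤ (2 * (T : ℝ) + 2) ^ ((pm - 1) / pm) :=
    Real.one_le_rpow hbase1 (div_nonneg (by linarith) hpm0.le)
  have hM1 : (1:ℝ) ≤ max wplus qplus := by
    obtain ⟨k0, hk0, hwk0⟩ := hwplus.1
    have : 1 ≤ wplus := hwk0 ▸ hw k0 hk0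
    exact le_trans this (le_max_left _ _)
  have hDbase : (1:ℝ) ≤ (2 * (T : ℝ) + 2) * max wplus qplus := by
    nlinarith
  have hD_pos : (0:ℝ) < ((2 * (T : ℝ) + 2) * max wplus qplus) ^ ((pm - pp) / (pp * pm)) :=
    Real.rpow_pos_of_pos (by linarith) _
  have hD1 : ((2 * (T : ℝ) + 2) * max wplus qplus) ^ ((pm - pp) / (pp * pm)) ≤ 1 :=
    Real.rpow_le_one_of_one_le_of_nonpos hDbase
      (div_nonpos_of_nonpos_of_nonneg (by linarith) (by positivity))
  have hX0 : (0:ℝ) ≤ (r * pp) ^ (1 / pp) := Real.rpow_nonneg (by positivity) _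
  refine le_trans hmain ?_
  rw [le_div_iff₀ hD_pos]
  nlinarith [mul_le_mul_of_nonneg_left hD1 hX0,
    le_mul_of_one_le_left hX0 hA1]
end

section
/- Let T ≥ 1, 2 ≤ α⁺ < p⁻ ≤ p⁺, c₀ > 0, λ > 0, and suppose F : {1,...,T} × ℝ → ℝ satisfies F(k,t) ≤ c₀(1 + |t|^{α(k)}) for all k,t, where α : {1,...,T} → [2,α⁺]. Let I_λ(u) = Φ(u) − λ∑_{k=1}^{T} F(k,u(k)) where Φ(u) ≥ ‖u‖^{p⁻}/p⁺ for ‖u‖ ≥ 1 (with ‖·‖ the discrete p⁻-norm on functions vanishing at 0 and T+1). Then I_λ is coercive: I_λ(u) → +∞ as ‖u‖ → ∞. In particular, for ‖u‖ > 1, I_λ(u) ≥ ‖u‖^{p⁻}/p⁺ − λ T c₀ (2T+2)^{(p⁻−1)α⁺/p⁻} ‖u‖^{α⁺} − λ T c₀. -/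
open Filter

theorem stmt_10 (T : ℕ) (hT : 1 ≤ T) (w q : ℕ → ℝ)
    (hw : ∀ k ≤ T, 1 ≤ w k) (hq : ∀ k, 1 ≤ k → k ≤ T + 1 → 1 ≤ q k)
    (pm pp alphap c0 lam : ℝ)
    (hpm : 2 ≤ pm) (hpmpp : pm ≤ pp) (halpha : 2 ≤ alphap) (halphapm : alphap < pm)
    (hc0 : 0 < c0) (hlam : 0 < lam)
    (alpha : ℕ → ℝ) (halpharange : ∀ k, 1 ≤ k → k ≤ T → 2 ≤ alpha k ∧ alpha k ≤ alphap)
    (F : ℕ → ℝ → ℝ)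
    (hF : ∀ k, 1 ≤ k → k ≤ T → ∀ t : ℝ, F k t ≤ c0 * (1 + |t| ^ alpha k))
    (Norm : (ℕ → ℝ) → ℝ)
    (hNorm : ∀ u : ℕ → ℝ, Norm u = (∑ k ∈ Finset.Icc 1 (T + 1),
        (w (k - 1) * |u k - u (k - 1)| ^ pm + q k * |u k| ^ pm)) ^ (1 / pm))
    (Phi : (ℕ → ℝ) → ℝ)
    (hPhi : ∀ u : ℕ → ℝ, u 0 = 0 → u (T + 1) = 0 → 1 ≤ Norm u →
        (Norm u) ^ pm / pp ≤ Phi u)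
    (I : (ℕ → ℝ) → ℝ)
    (hI : ∀ u : ℕ → ℝ, I u = Phi u - lam * ∑ k ∈ Finset.Icc 1 T, F k (u k)) :
    (∀ u : ℕ → ℝ, u 0 = 0 → u (T + 1) = 0 → 1 < Norm u →
      I u ≥ (Norm u) ^ pm / pp
        - lam * T * c0 * (2 * (T : ℝ) + 2) ^ ((pm - 1) * alphap / pm) * (Norm u) ^ alphap
        - lam * T * c0) ∧
    (∀ U : ℕ → (ℕ → ℝ), (∀ n, U n 0 = 0 ∧ U n (T + 1) = 0) →
      Tendsto (fun n => Norm (U n)) atTop atTop →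
      Tendsto (fun n => I (U n)) atTop atTop) := by

  have hpm0 : (0:ℝ) < pm := by linarith
  have hpp0 : (0:ℝ) < pp := by linarith
  have halphap0 : (0:ℝ) < alphap := by linarith
  have hT1 : (1:ℝ) ≤ (T:ℝ) := by exact_mod_cast hT
  set C : ℝ := (2 * (T : ℝ) + 2) ^ ((pm - 1) * alphap / pm) with hCdef
  have hC1 : 1 ≤ C := by
    apply Real.one_le_rpow (by linarith)
    apply div_nonneg (mul_nonneg (by linarith) (by linarith)) hpm0.le
  have key : ∀ u : ℕ → ℝ, u 0 = 0 → u (T + 1) = 0 → 1 < Norm u →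
      I u ≥ (Norm u) ^ pm / pp - lam * T * c0 * C * (Norm u) ^ alphap - lam * T * c0 := by
    intro u h0 hT1u hN
    have hNpos : (0:ℝ) < Norm u := lt_trans one_pos hN
    have hsup : ∀ k, 1 ≤ k → k ≤ T → |u k| ≤ Norm u := by
      intro k hk1 hk2
      have hkT1 : k ∈ Finset.Icc 1 (T + 1) := Finset.mem_Icc.mpr ⟨hk1, by omega⟩
      have hterm : |u k| ^ pm ≤ ∑ j ∈ Finset.Icc 1 (T + 1),
          (w (j - 1) * |u j - u (j - 1)| ^ pm + q j * |u j| ^ pm) := by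
        have hnn : ∀ j ∈ Finset.Icc 1 (T + 1),
            0 ≤ w (j - 1) * |u j - u (j - 1)| ^ pm + q j * |u j| ^ pm := by
          intro j hj
          simp only [Finset.mem_Icc] at hj
          have hw' := hw (j - 1) (by omega)
          have hq' := hq j hj.1 hj.2
          have := Real.rpow_nonneg (abs_nonneg (u j - u (j - 1))) pm
          have := Real.rpow_nonneg (abs_nonneg (u j)) pm
          nlinarith
        have hsingle := Finset.single_le_sum hnn hkT1
        have hw' := hw (k - 1) (by omega)
        have hq' := hq k hk1 (by omega)
        have h1 := Real.rpow_nonneg (abs_nonneg (u k - u (k - 1))) pm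
        have h2 := Real.rpow_nonneg (abs_nonneg (u k)) pm
        nlinarith
      have habs : |u k| = (|u k| ^ pm) ^ (1 / pm) := by
        rw [← Real.rpow_mul (abs_nonneg _), mul_one_div, div_self hpm0.ne', Real.rpow_one]
      rw [habs, hNorm u]
      apply Real.rpow_le_rpow (Real.rpow_nonneg (abs_nonneg _) _) hterm
      positivity
    have hFsum : ∑ k ∈ Finset.Icc 1 T, F k (u k) ≤ T * (c0 * (1 + (Norm u) ^ alphap)) := by
      calc ∑ k ∈ Finset.Icc 1 T, F k (u k)
          ≤ ∑ k ∈ Finset.Icc 1 T, c0 * (1 + (Norm u) ^ alphap) := by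
            apply Finset.sum_le_sum
            intro k hk
            simp only [Finset.mem_Icc] at hk
            have h1 := hF k hk.1 hk.2 (u k)
            have ha := halpharange k hk.1 hk.2
            have h2 : |u k| ^ alpha k ≤ (Norm u) ^ alphap := by
              calc |u k| ^ alpha k ≤ (Norm u) ^ alpha k :=
                    Real.rpow_le_rpow (abs_nonneg _) (hsup k hk.1 hk.2) (by linarith [ha.1])
                _ ≤ (Norm u) ^ alphap :=
                    Real.rpow_le_rpow_of_exponent_le hN.le ha.2
            nlinarith
        _ = T * (c0 * (1 + (Norm u) ^ alphap)) := by
            rw [Finset.sum_const, Nat.card_Icc]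
            simp
    have hPhiu := hPhi u h0 hT1u hN.le
    have hNa : 0 < (Norm u) ^ alphap := Real.rpow_pos_of_pos hNpos alphap
    have hCmul : lam * T * c0 * (Norm u) ^ alphap ≤ lam * T * c0 * C * (Norm u) ^ alphap := by
      have hpos : 0 < lam * T * c0 := by positivity
      exact mul_le_mul_of_nonneg_right (le_mul_of_one_le_right hpos.le hC1) hNa.le
    rw [hI u]
    have hsumle : lam * ∑ k ∈ Finset.Icc 1 T, F k (u k)
        ≤ lam * (T * (c0 * (1 + (Norm u) ^ alphap))) :=
      mul_le_mul_of_nonneg_left hFsum hlam.le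
    nlinarith
  constructor
  · exact key
  · intro U hU hNU
    have hg : Tendsto (fun x : ℝ => x ^ pm / pp - lam * T * c0 * C * x ^ alphap - lam * T * c0)
        atTop atTop := by
      have h1 : Tendsto (fun x : ℝ =>
          x ^ alphap * (x ^ (pm - alphap) / pp - lam * T * c0 * C) - lam * T * c0)
          atTop atTop := by
        apply Filter.tendsto_atTop_add_const_right
        exact (tendsto_rpow_atTop halphap0).atTop_mul_atTop₀
          (Filter.tendsto_atTop_add_const_right _ _
            ((tendsto_rpow_atTop (by linarith)).atTop_div_const hpp0))
      apply h1.congr'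
      filter_upwards [eventually_gt_atTop (0:ℝ)] with x hx
      have hx' : x ^ alphap * x ^ (pm - alphap) = x ^ pm := by
        rw [← Real.rpow_add hx]; ring_nf
      field_simp
      nlinarith [hx']
    have hcomp := hg.comp hNU
    apply tendsto_atTop_mono' atTop _ hcomp
    filter_upwards [hNU.eventually_gt_atTop 1] with n hn
    exact key (U n) (hU n).1 (hU n).2 hn
end

section
/- Let n ≥ 1, let a₁,...,aₙ ∈ [0,1], and let 2 ≤ p⁻ ≤ p⁺, with exponents p₁,...,pₙ ∈ [p⁻,p⁺] and weights w₁,...,wₙ ≥ 1 with W = max wᵢ. Then ∑_{i=1}^{n} wᵢ aᵢ^{p⁻} − nW ≤ ∑_{i=1}^{n} wᵢ aᵢ^{pᵢ} ≤ ∑_{i=1}^{n} wᵢ aᵢ^{p⁺} + nW, and in fact without the restriction aᵢ ∈ [0,1]: for arbitrary aᵢ ≥ 0, ∑_{i=1}^{n} wᵢ aᵢ^{p⁻} − nW ≤ ∑_{i=1}^{n} wᵢ aᵢ^{pᵢ} ≤ ∑_{i=1}^{n} wᵢ aᵢ^{p⁺} + nW. -/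
theorem stmt_16 (n : ℕ) (hn : 1 ≤ n) (a w p : Fin n → ℝ)
    (ha : ∀ i, 0 ≤ a i) (hw : ∀ i, 1 ≤ w i)
    (pm pp W : ℝ) (hpm : 2 ≤ pm) (hpmpp : pm ≤ pp)
    (hp : ∀ i, pm ≤ p i ∧ p i ≤ pp)
    (hW : IsGreatest (Set.range w) W) :
    (∑ i, w i * a i ^ pm) - n * W ≤ ∑ i, w i * a i ^ p i ∧
    (∑ i, w i * a i ^ p i) ≤ (∑ i, w i * a i ^ pp) + n * W := by
  have hwW : ∀ i, w i ≤ W := fun i => hW.2 ⟨i, rfl⟩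
  have hW1 : ∀ i, (1:ℝ) ≤ W := fun i => le_trans (hw i) (hwW i)
  have hppos : (0:ℝ) < pm := by linarith
  have hterm1 : ∀ i, w i * a i ^ pm - W ≤ w i * a i ^ p i := by
    intro i
    rcases le_or_gt 1 (a i) with h1 | h1
    · have : a i ^ pm ≤ a i ^ p i :=
        Real.rpow_le_rpow_of_exponent_le h1 (hp i).1
      nlinarith [hw i, hwW i, Real.rpow_nonneg (ha i) pm]
    · have h2 : a i ^ pm ≤ 1 := Real.rpow_le_one (ha i) h1.le hppos.le
      have h3 : 0 ≤ a i ^ p i := Real.rpow_nonneg (ha i) _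
      nlinarith [hw i, hwW i, Real.rpow_nonneg (ha i) pm]
  have hterm2 : ∀ i, w i * a i ^ p i ≤ w i * a i ^ pp + W := by
    intro i
    rcases le_or_gt 1 (a i) with h1 | h1
    · have : a i ^ p i ≤ a i ^ pp :=
        Real.rpow_le_rpow_of_exponent_le h1 (hp i).2
      nlinarith [hw i, hwW i]
    · have h2 : a i ^ p i ≤ 1 :=
        Real.rpow_le_one (ha i) h1.le (by linarith [(hp i).1])
      have h3 : 0 ≤ a i ^ pp := Real.rpow_nonneg (ha i) _
      nlinarith [hw i, hwW i, Real.rpow_nonneg (ha i) (p i)]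
  constructor
  · have := Finset.sum_le_sum (fun i (_ : i ∈ Finset.univ) => hterm1 i)
    simp only [Finset.sum_sub_distrib, Finset.sum_const, Finset.card_univ,
      Fintype.card_fin, nsmul_eq_mul] at this
    linarith
  · have := Finset.sum_le_sum (fun i (_ : i ∈ Finset.univ) => hterm2 i)
    simp only [Finset.sum_add_distrib, Finset.sum_const, Finset.card_univ,
      Fintype.card_fin, nsmul_eq_mul] at this
    linarith
end

section
/- Let T ≥ 1 and let f : {1,...,T} × ℝ → ℝ be a non-negative continuous function. Suppose u : {0,...,T+1} → ℝ with u(0) = u(T+1) = 0 solves −Δ(w(k-1)|Δu(k-1)|^{p(k-1)-2}Δu(k-1)) + q(k)|u(k)|^{p(k)-2}u(k) = λ f(k,u(k)) for all k ∈ {1,...,T}, where λ > 0, w ≥ 1, q ≥ 1, p(·) ≥ 2. Then u(k) ≥ 0 for all k ∈ {0,...,T+1}. -/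
theorem stmt_17 (T : ℕ) (hT : 1 ≤ T) (p w q : ℕ → ℝ)
    (hp : ∀ k ≤ T + 1, 2 ≤ p k)
    (hw : ∀ k ≤ T, 1 ≤ w k) (hq : ∀ k, 1 ≤ k → k ≤ T → 1 ≤ q k)
    (f : ℕ → ℝ → ℝ) (hfcont : ∀ k, Continuous (f k))
    (hfpos : ∀ k, 1 ≤ k → k ≤ T → ∀ t : ℝ, 0 ≤ f k t)
    (lam : ℝ) (hlam : 0 < lam)
    (u : ℕ → ℝ) (hu0 : u 0 = 0) (huT : u (T + 1) = 0)
    (hsol : ∀ k ∈ Finset.Icc 1 T,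
      -((w k * |u (k + 1) - u k| ^ (p k - 2) * (u (k + 1) - u k))
          - (w (k - 1) * |u k - u (k - 1)| ^ (p (k - 1) - 2) * (u k - u (k - 1))))
        + q k * |u k| ^ (p k - 2) * u k = lam * f k (u k)) :
    ∀ k ≤ T + 1, 0 ≤ u k := by
  obtain ⟨k₀, hk₀mem, hk₀min⟩ :=
    Finset.exists_min_image (Finset.Icc 0 (T + 1)) u ⟨0, by simp⟩
  intro k hk
  have hmin : ∀ j ≤ T + 1, u k₀ ≤ u j := fun j hj =>
    hk₀min j (Finset.mem_Icc.mpr ⟨Nat.zero_le _, hj⟩)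
  have key : 0 ≤ u k₀ := by
    by_contra h
    push_neg at h
    have hk1 : 1 ≤ k₀ := by
      rcases Nat.eq_zero_or_pos k₀ with h0' | h0'
      · rw [h0', hu0] at h; linarith
      · exact h0'
    have hkT : k₀ ≤ T := by
      have hle : k₀ ≤ T + 1 := (Finset.mem_Icc.mp hk₀mem).2
      rcases Nat.lt_or_ge k₀ (T + 1) with h' | h'
      · omega
      · have : k₀ = T + 1 := le_antisymm hle h'
        rw [this, huT] at h; linarith
    have hs := hsol k₀ (Finset.mem_Icc.mpr ⟨hk1, hkT⟩)
    have hΔp : 0 ≤ u (k₀ + 1) - u k₀ := by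
      have := hmin (k₀ + 1) (by omega); linarith
    have hΔm : u k₀ - u (k₀ - 1) ≤ 0 := by
      have := hmin (k₀ - 1) (by omega); linarith
    have hA : 0 ≤ w k₀ * |u (k₀ + 1) - u k₀| ^ (p k₀ - 2) * (u (k₀ + 1) - u k₀) :=
      mul_nonneg (mul_nonneg (by linarith [hw k₀ hkT])
        (Real.rpow_nonneg (abs_nonneg _) _)) hΔp
    have hB : w (k₀ - 1) * |u k₀ - u (k₀ - 1)| ^ (p (k₀ - 1) - 2) * (u k₀ - u (k₀ - 1)) ≤ 0 :=
      mul_nonpos_of_nonneg_of_nonpos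
        (mul_nonneg (by linarith [hw (k₀ - 1) (by omega : k₀ - 1 ≤ T)])
          (Real.rpow_nonneg (abs_nonneg _) _)) hΔm
    have hC : q k₀ * |u k₀| ^ (p k₀ - 2) * u k₀ < 0 := by
      apply mul_neg_of_pos_of_neg _ h
      exact mul_pos (by linarith [hq k₀ hk1 hkT])
        (Real.rpow_pos_of_pos (abs_pos.mpr (ne_of_lt h)) _)
    have hR : 0 ≤ lam * f k₀ (u k₀) := mul_nonneg hlam.le (hfpos k₀ hk1 hkT _)
    linarith
  linarith [hmin k hk]
end
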